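/- For every integer n ≥ 0, the composite (π_n ⊗ π_n) ∘ ψ : 𝒜 → A(n) ⊗_{π_n∘η_R, π_n∘η_L} A(n) vanishes on the ideal I(n); consequently there is a unique ring homomorphism ψ_n : A(n) → A(n) ⊗_{π_n∘η_R, π_n∘η_L} A(n) with ψ_n ∘ π_n = (π_n ⊗ π_n) ∘ ψ. (The paper's verification that the coproduct of the dual motivic Steenrod algebroid descends to a coproduct on the quotient A(n)_{∗,∗}, case ℓ = 2.) -/

import Mathlib

open MvPolynomial TensorProduct

set_option synthInstance.maxHeartbeats 1000000
set_option maxHeartbeats 1000000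

noncomputable section

/-- Variables of the dual motivic Steenrod algebra: `.inl i` is `τᵢ`, `.inr i` is `ξ_{i+1}`. -/
abbrev MotVar : Type := ℕ ⊕ ℕ

variable (k : Type) [CommRing k]

/-- `τᵢ` as a polynomial generator. -/
def tP (i : ℕ) : MvPolynomial MotVar k := X (Sum.inl i)

/-- `ξᵢ` as a polynomial generator, with the convention `ξ₀ = 1`. -/
def xP : ℕ → MvPolynomial MotVar k
  | 0 => 1
  | i + 1 => X (Sum.inr i)

variable (τ ρ : k)

/-- The ideal of defining relations `τᵢ² = τ·ξ_{i+1} + ρ·τ_{i+1} + ρ·τ₀·ξ_{i+1}`. -/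
def relIdeal : Ideal (MvPolynomial MotVar k) :=
  Ideal.span (Set.range fun i : ℕ =>
    tP k i ^ 2 - (C τ * xP k (i + 1) + C ρ * tP k (i + 1) + C ρ * tP k 0 * xP k (i + 1)))

/-- The mod 2 dual motivic Steenrod algebra over `k` (with `H_{*,*}` replaced by `k`). -/
abbrev DSA : Type := MvPolynomial MotVar k ⧸ relIdeal k τ ρ

/-- The canonical projection onto the dual Steenrod algebra. -/
def mkDSA : MvPolynomial MotVar k →+* DSA k τ ρ := Ideal.Quotient.mk _

/-- The monomial `τ^E ξ^R`, where `R i` records the exponent `r_{i+1}` of `ξ_{i+1}`. -/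
def monP (E R : ℕ →₀ ℕ) : MvPolynomial MotVar k :=
  (E.prod fun i e => tP k i ^ e) * (R.prod fun i r => xP k (i + 1) ^ r)

/-- The ideal `I(n) ⊆ 𝒜`, generated by the `τ_m` with `m ≥ n+1` and the `ξᵢ^{2^j}`
with `i ≥ 1`, `j ≥ 0`, `i + j ≥ n+1`. -/
def Iideal (n : ℤ) : Ideal (DSA k τ ρ) :=
  Ideal.span ({x | ∃ m : ℕ, n + 1 ≤ (m : ℤ) ∧ x = mkDSA k τ ρ (tP k m)} ∪
    {x | ∃ i j : ℕ, 1 ≤ i ∧ n + 1 ≤ (i : ℤ) + (j : ℤ) ∧ x = mkDSA k τ ρ (xP k i ^ 2 ^ j)})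

/-- The quotient `A(n) = 𝒜/I(n)`. -/
abbrev An (n : ℤ) : Type := DSA k τ ρ ⧸ Iideal k τ ρ n

instance (n : ℤ) : CommRing (An k τ ρ n) := inferInstance

/-- `k = F₂[τ, ρ]`, the mod 2 motivic cohomology ring of the base in the paper's model. -/
abbrev kk : Type := MvPolynomial (Fin 2) (ZMod 2)

/-- The element `τ ∈ k`. -/
def τ₂ : kk := X 0

/-- The element `ρ ∈ k`. -/
def ρ₂ : kk := X 1

/-- The right unit `η_R : k → 𝒜`: the unique `F₂`-algebra homomorphism with
`η_R(τ) = τ + ρ·τ₀` and `η_R(ρ) = ρ`. -/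
def etaR : kk →+* DSA kk τ₂ ρ₂ :=
  (MvPolynomial.aeval (R := ZMod 2)
    ![algebraMap kk (DSA kk τ₂ ρ₂) τ₂ +
        algebraMap kk (DSA kk τ₂ ρ₂) ρ₂ * mkDSA kk τ₂ ρ₂ (tP kk 0),
      algebraMap kk (DSA kk τ₂ ρ₂) ρ₂]).toRingHom

/-- Type synonym: `𝒜` viewed as a `k`-algebra via the right unit `η_R`. -/
def DSAr : Type := DSA kk τ₂ ρ₂

instance : CommRing DSAr := inferInstanceAs (CommRing (DSA kk τ₂ ρ₂))

instance : Algebra kk DSAr := etaR.toAlgebra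

/-- The identity of `𝒜`, viewed as a map to the synonym `DSAr`. -/
def toR : DSA kk τ₂ ρ₂ →+* DSAr := RingHom.id (DSA kk τ₂ ρ₂)

/-- Type synonym: `A(n)` viewed as a `k`-algebra via `π_n ∘ η_R`. -/
def Anr (n : ℤ) : Type := An kk τ₂ ρ₂ n

instance (n : ℤ) : CommRing (Anr n) := inferInstanceAs (CommRing (An kk τ₂ ρ₂ n))

instance (n : ℤ) : Algebra kk (Anr n) :=
  ((Ideal.Quotient.mk (Iideal kk τ₂ ρ₂ n)).comp etaR).toAlgebra

/-- The identity of `A(n)`, viewed as a map to the synonym `Anr n`. -/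
def toAnr (n : ℤ) : An kk τ₂ ρ₂ n →+* Anr n := RingHom.id (An kk τ₂ ρ₂ n)

/-- The projection `π_n : 𝒜 → A(n)` as a `k`-algebra homomorphism for the
right-unit algebra structures. -/
def pinAlg (n : ℤ) : DSAr →ₐ[kk] Anr n :=
  { toRingHom :=
      ((Ideal.Quotient.mk (Iideal kk τ₂ ρ₂ n) : DSA kk τ₂ ρ₂ →+* An kk τ₂ ρ₂ n) :
        DSAr →+* Anr n)
    commutes' := fun _ => rfl }

/-- The defining property of the coproduct `ψ : 𝒜 → 𝒜 ⊗_{η_R, η_L} 𝒜`: it is a ring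
homomorphism with `ψ(η_L(h)) = η_L(h) ⊗ 1`, `ψ(τ_m) = τ_m ⊗ 1 + Σ_{i+j=m} ξᵢ^{2^j} ⊗ τ_j`
and `ψ(ξ_m) = Σ_{i+j=m} ξᵢ^{2^j} ⊗ ξ_j` (with `ξ₀ = 1`). -/
def IsCoproduct (ψ : DSA kk τ₂ ρ₂ →+* DSAr ⊗[kk] DSA kk τ₂ ρ₂) : Prop :=
  (∀ h : kk, ψ (algebraMap kk (DSA kk τ₂ ρ₂) h) =
      toR (algebraMap kk (DSA kk τ₂ ρ₂) h) ⊗ₜ[kk] (1 : DSA kk τ₂ ρ₂)) ∧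
  (∀ m : ℕ, ψ (mkDSA kk τ₂ ρ₂ (tP kk m)) =
      toR (mkDSA kk τ₂ ρ₂ (tP kk m)) ⊗ₜ[kk] 1 +
        ∑ j ∈ Finset.range (m + 1),
          toR (mkDSA kk τ₂ ρ₂ (xP kk (m - j) ^ 2 ^ j)) ⊗ₜ[kk] mkDSA kk τ₂ ρ₂ (tP kk j)) ∧
  (∀ m : ℕ, 1 ≤ m → ψ (mkDSA kk τ₂ ρ₂ (xP kk m)) =
      ∑ j ∈ Finset.range (m + 1),
        toR (mkDSA kk τ₂ ρ₂ (xP kk (m - j) ^ 2 ^ j)) ⊗ₜ[kk] mkDSA kk τ₂ ρ₂ (xP kk j))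

/-- `π_n ⊗ π_n : 𝒜 ⊗_{η_R,η_L} 𝒜 → A(n) ⊗_{π_n∘η_R, π_n∘η_L} A(n)`. -/
def mapLR (n : ℤ) : DSAr ⊗[kk] DSA kk τ₂ ρ₂ →ₐ[kk] Anr n ⊗[kk] An kk τ₂ ρ₂ n :=
  Algebra.TensorProduct.map (pinAlg n) (Ideal.Quotient.mkₐ kk (Iideal kk τ₂ ρ₂ n))

/-! Since `I(n)` is generated by the `τ_m` with `m > n` and the `ξ_i^{2^j}` with `i + j > n`, it
suffices to check `(π_n ⊗ π_n) ∘ ψ` on these generators. Every summand `ξ_{m-b}^{2^b} ⊗ τ_b` of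
`ψ(τ_m)` has a tensor factor in `I(n)`. As `2 = 0`, Frobenius is additive and
`ψ(ξ_i^{2^j}) = Σ_b ξ_{i-b}^{2^{b+j}} ⊗ ξ_b^{2^j}`, whose summands again each have a factor in
`I(n)`. The universal property of the quotient then gives `ψ_n`. -/

/-- Stated with `2 = 0` rather than `CharP R 2`, which fails for the zero ring. -/
lemma sum_pow_two_pow_of_two_eq_zero {R ι : Type*} [CommRing R] (h2 : (2 : R) = 0)
    (s : Finset ι) (f : ι → R) (j : ℕ) :
    (∑ i ∈ s, f i) ^ 2 ^ j = ∑ i ∈ s, f i ^ 2 ^ j := by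
  nontriviality R
  have := CharTwo.of_one_ne_zero_of_two_eq_zero one_ne_zero h2
  exact sum_pow_char_pow 2 j s f

lemma two_eq_zero_of_algebra_kk (R : Type*) [Semiring R] [Algebra kk R] : (2 : R) = 0 := by
  rw [← map_ofNat (algebraMap kk R) 2, CharTwo.two_eq_zero (R := kk), map_zero]

lemma Ideal.Quotient.existsUnique_lift {R S : Type*} [CommRing R] [Semiring S] (I : Ideal R)
    (f : R →+* S) (hf : ∀ x ∈ I, f x = 0) :
    ∃! g : R ⧸ I →+* S, ∀ x, g (Ideal.Quotient.mk I x) = f x :=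
  ⟨Ideal.Quotient.lift I f hf, fun _ => Ideal.Quotient.lift_mk I f hf, fun g hg =>
    Ideal.Quotient.ringHom_ext (RingHom.ext fun x => by simp [hg])⟩

lemma mkDSA_tP_mem_Iideal {n : ℤ} {m : ℕ} (hm : n + 1 ≤ (m : ℤ)) :
    mkDSA kk τ₂ ρ₂ (tP kk m) ∈ Iideal kk τ₂ ρ₂ n :=
  Ideal.subset_span (Or.inl ⟨m, hm, rfl⟩)

lemma mkDSA_xP_pow_mem_Iideal {n : ℤ} {i j : ℕ} (hi : 1 ≤ i) (hij : n + 1 ≤ (i : ℤ) + j) :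
    mkDSA kk τ₂ ρ₂ (xP kk i ^ 2 ^ j) ∈ Iideal kk τ₂ ρ₂ n :=
  Ideal.subset_span (Or.inr ⟨i, j, hi, hij, rfl⟩)

lemma mapLR_tmul_eq_zero {n : ℤ} {a b : DSA kk τ₂ ρ₂}
    (h : a ∈ Iideal kk τ₂ ρ₂ n ∨ b ∈ Iideal kk τ₂ ρ₂ n) : mapLR n (toR a ⊗ₜ[kk] b) = 0 := by
  change pinAlg n (toR a) ⊗ₜ[kk] Ideal.Quotient.mk (Iideal kk τ₂ ρ₂ n) b = 0
  rcases h with ha | hb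
  · rw [show pinAlg n (toR a) = 0 from
      (Ideal.Quotient.eq_zero_iff_mem (I := Iideal kk τ₂ ρ₂ n)).mpr ha, zero_tmul]
  · rw [Ideal.Quotient.eq_zero_iff_mem.mpr hb, tmul_zero]

section Coproduct

variable {ψ : DSA kk τ₂ ρ₂ →+* DSAr ⊗[kk] DSA kk τ₂ ρ₂} (hψ : IsCoproduct ψ)
include hψ

lemma IsCoproduct.mapLR_map_tP_eq_zero {n : ℤ} {m : ℕ} (hm : n + 1 ≤ (m : ℤ)) :
    mapLR n (ψ (mkDSA kk τ₂ ρ₂ (tP kk m))) = 0 := by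
  rw [hψ.2.1 m, map_add, map_sum, mapLR_tmul_eq_zero (.inl (mkDSA_tP_mem_Iideal hm)), zero_add]
  refine Finset.sum_eq_zero fun b hb => mapLR_tmul_eq_zero ?_
  rcases (Nat.lt_succ_iff.mp (Finset.mem_range.mp hb)).eq_or_lt with rfl | hbm
  · exact .inr (mkDSA_tP_mem_Iideal hm)
  · exact .inl (mkDSA_xP_pow_mem_Iideal (by omega) (by push_cast [Nat.cast_sub hbm.le]; omega))

lemma IsCoproduct.map_xP_pow {i : ℕ} (hi : 1 ≤ i) (j : ℕ) :
    ψ (mkDSA kk τ₂ ρ₂ (xP kk i ^ 2 ^ j)) =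
      ∑ b ∈ Finset.range (i + 1),
        toR (mkDSA kk τ₂ ρ₂ (xP kk (i - b) ^ 2 ^ (b + j))) ⊗ₜ[kk]
          mkDSA kk τ₂ ρ₂ (xP kk b ^ 2 ^ j) := by
  rw [map_pow, map_pow, hψ.2.2 i hi]
  refine (sum_pow_two_pow_of_two_eq_zero (R := DSAr ⊗[kk] DSA kk τ₂ ρ₂)
    (two_eq_zero_of_algebra_kk _) _ _ j).trans
    (Finset.sum_congr rfl fun b _ => ?_)
  rw [Algebra.TensorProduct.tmul_pow, ← map_pow, ← map_pow, ← map_pow, ← pow_mul, ← pow_add]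

lemma IsCoproduct.mapLR_map_xP_pow_eq_zero {n : ℤ} {i j : ℕ} (hi : 1 ≤ i)
    (hij : n + 1 ≤ (i : ℤ) + j) : mapLR n (ψ (mkDSA kk τ₂ ρ₂ (xP kk i ^ 2 ^ j))) = 0 := by
  rw [hψ.map_xP_pow hi, map_sum]
  refine Finset.sum_eq_zero fun b hb => mapLR_tmul_eq_zero ?_
  rcases (Nat.lt_succ_iff.mp (Finset.mem_range.mp hb)).eq_or_lt with rfl | hbi
  · exact .inr (mkDSA_xP_pow_mem_Iideal hi hij)
  · exact .inl (mkDSA_xP_pow_mem_Iideal (by omega) (by push_cast [Nat.cast_sub hbi.le]; omega))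

lemma IsCoproduct.mapLR_map_eq_zero_of_mem {n : ℤ} {x : DSA kk τ₂ ρ₂}
    (hx : x ∈ Iideal kk τ₂ ρ₂ n) : mapLR n (ψ x) = 0 := by
  have hker : Iideal kk τ₂ ρ₂ n ≤ RingHom.ker ((mapLR n).toRingHom.comp ψ) := by
    refine Ideal.span_le.mpr ?_
    rintro _ (⟨m, hm, rfl⟩ | ⟨i, j, hi, hij, rfl⟩)
    · exact hψ.mapLR_map_tP_eq_zero hm
    · exact hψ.mapLR_map_xP_pow_eq_zero hi hij
  exact hker hx

end Coproduct

/-- For every `n ≥ 0`, the composite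
`(π_n ⊗ π_n) ∘ ψ : 𝒜 → A(n) ⊗_{π_n∘η_R, π_n∘η_L} A(n)` vanishes on the ideal `I(n)`;
consequently there is a unique ring homomorphism
`ψ_n : A(n) → A(n) ⊗_{π_n∘η_R, π_n∘η_L} A(n)` with `ψ_n ∘ π_n = (π_n ⊗ π_n) ∘ ψ`. -/
theorem statement19 (n : ℕ)
    (ψ : DSA kk τ₂ ρ₂ →+* DSAr ⊗[kk] DSA kk τ₂ ρ₂) (hψ : IsCoproduct ψ) :
    (∀ x ∈ Iideal kk τ₂ ρ₂ (n : ℤ), mapLR (n : ℤ) (ψ x) = 0) ∧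
    ∃! ψn : An kk τ₂ ρ₂ (n : ℤ) →+* Anr (n : ℤ) ⊗[kk] An kk τ₂ ρ₂ (n : ℤ),
      ∀ x : DSA kk τ₂ ρ₂,
        ψn (Ideal.Quotient.mk (Iideal kk τ₂ ρ₂ (n : ℤ)) x) = mapLR (n : ℤ) (ψ x) :=
  ⟨fun _ => hψ.mapLR_map_eq_zero_of_mem,
    Ideal.Quotient.existsUnique_lift _ ((mapLR n).toRingHom.comp ψ)
      fun _ => hψ.mapLR_map_eq_zero_of_mem⟩

end
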